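/- For n ≥ 4, let P*_{4,n} = {p₁,…,p_n} be the poset with relations generated by p₁ ≼ p₂ ≼ … ≼ p_{⌊(n−1)/2⌋} ≼ p_{⌊(n−1)/2⌋+2} ≼ … ≼ p_n and p_{⌊(n−1)/2⌋+1} ≼ p_{⌊(n−1)/2⌋+2}. Then F = Σ_{i=1}^{⌊(n−1)/2⌋} E*_{p_i,p_{n+1−i}} + Σ_{i=⌈n/2⌉}^{n} E*_{p_{⌈n/2⌉},p_i} (with the degenerate diagonal summand omitted) is a Frobenius functional on g_A(P*_{4,n}), and the spectrum of g_A(P*_{4,n}) is binary, i.e., consists of an equal number of 0's and 1's. -/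

import Mathlib

/-!
Common definitions: for a finite poset `P`, identified with `{1,…,n}` via a linear
extension, represented by a relation `le` on `Fin n`, the type-A Lie poset algebra
`gA le` is the Lie subalgebra of `sl(n, ℂ)` spanned by the matrix units `E p q`
for `p ≺ q` together with all trace-zero diagonal matrices (here realized as a
submodule of complex `n × n` matrices, which is closed under the commutator
bracket).  `gFull le` is the full Lie poset algebra `g(P)` (with all diagonal
matrices).  `FS S` is the functional `F_S = ∑_{(p,q) ∈ S} E*_{p,q}`.
-/

namespace LiePosets

noncomputable section

open scoped BigOperators

/-- Complex `n × n` matrices. -/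
abbrev M (n : ℕ) : Type := Matrix (Fin n) (Fin n) ℂ

/-- The strict relation `p ≺ q` attached to a poset relation `le`. -/
def Strict {n : ℕ} (le : Fin n → Fin n → Prop) (p q : Fin n) : Prop := le p q ∧ p ≠ q

/-- The type-A Lie poset algebra `g_A(P)`: trace-zero matrices supported on
relations of the poset (off-diagonal entries vanish off the strict relations). -/
def gA {n : ℕ} (le : Fin n → Fin n → Prop) : Submodule ℂ (M n) where
  carrier := {A | Matrix.trace A = 0 ∧ ∀ p q : Fin n, p ≠ q → ¬ le p q → A p q = 0}
  add_mem' := by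
    rintro A B ⟨hA, hA'⟩ ⟨hB, hB'⟩
    exact ⟨by simp [hA, hB], fun p q h1 h2 => by
      simp [Matrix.add_apply, hA' p q h1 h2, hB' p q h1 h2]⟩
  zero_mem' := ⟨by simp, fun p q _ _ => by simp⟩
  smul_mem' := by
    rintro c A ⟨hA, hA'⟩
    exact ⟨by simp [hA], fun p q h1 h2 => by
      simp [Matrix.smul_apply, hA' p q h1 h2]⟩

/-- The Lie poset algebra `g(P)` (all diagonal matrices allowed). -/
def gFull {n : ℕ} (le : Fin n → Fin n → Prop) : Submodule ℂ (M n) where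
  carrier := {A | ∀ p q : Fin n, p ≠ q → ¬ le p q → A p q = 0}
  add_mem' := by
    rintro A B hA hB p q h1 h2
    simp [Matrix.add_apply, hA p q h1 h2, hB p q h1 h2]
  zero_mem' := fun p q _ _ => by simp
  smul_mem' := by
    rintro c A hA p q h1 h2
    simp [Matrix.smul_apply, hA p q h1 h2]

/-- The functional `F_S = ∑_{(p,q) ∈ S} E*_{p,q}` reading off the sum of the
coefficients of the matrix entries indexed by `S`. -/
def FS {n : ℕ} (S : Finset (Fin n × Fin n)) : M n →ₗ[ℂ] ℂ where
  toFun A := ∑ pq ∈ S, A pq.1 pq.2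
  map_add' A B := by simp [Matrix.add_apply, Finset.sum_add_distrib]
  map_smul' c A := by simp [Matrix.smul_apply, Finset.mul_sum]

/-- `F` is a Frobenius functional on the Lie subalgebra (submodule) `g`:
the kernel of the Kirillov form `B_F(x, y) = F ⁅x, y⁆` on `g` is trivial. -/
def IsFrobeniusOn {n : ℕ} (g : Submodule ℂ (M n)) (F : M n →ₗ[ℂ] ℂ) : Prop :=
  ∀ x ∈ g, (∀ y ∈ g, F ⁅x, y⁆ = 0) → x = 0

/-- `H` is a principal element for `F` on `g`:  `B_F(H, ·) = F` on `g`. -/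
def IsPrincipal {n : ℕ} (g : Submodule ℂ (M n)) (F : M n →ₗ[ℂ] ℂ) (H : M n) : Prop :=
  H ∈ g ∧ ∀ y ∈ g, F ⁅H, y⁆ = F y

/-- The adjoint action `ad H = ⁅H, -⁆` as a linear endomorphism of matrices. -/
def adE {n : ℕ} (H : M n) : Module.End ℂ (M n) :=
  LinearMap.mulLeft ℂ H - LinearMap.mulRight ℂ H

/-- Multiplicity of `μ` as an eigenvalue of `ad H` acting on `g`. -/
def eigMult {n : ℕ} (g : Submodule ℂ (M n)) (H : M n) (μ : ℂ) : ℕ :=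
  Module.finrank ℂ ↥(g ⊓ Module.End.eigenspace (adE H) μ)

/-- `g` has a binary spectrum: for any Frobenius functional `F` and corresponding
principal element `H`, the multiset of eigenvalues of `ad H` on `g` consists of an
equal number of `0`'s and `1`'s. -/
def HasBinarySpectrum {n : ℕ} (g : Submodule ℂ (M n)) : Prop :=
  ∀ (F : M n →ₗ[ℂ] ℂ) (H : M n), IsFrobeniusOn g F → IsPrincipal g F H →
    eigMult g H 0 = eigMult g H 1 ∧
    eigMult g H 0 + eigMult g H 1 = Module.finrank ℂ ↥g

/-- The kernel of the Kirillov form `B_F` on `g`. -/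
def kirKer {n : ℕ} (g : Submodule ℂ (M n)) (F : M n →ₗ[ℂ] ℂ) : Submodule ℂ (M n) where
  carrier := {x | x ∈ g ∧ ∀ y ∈ g, F ⁅x, y⁆ = 0}
  zero_mem' := ⟨g.zero_mem, fun y _ => by rw [Ring.lie_def, zero_mul, mul_zero, sub_zero, map_zero]⟩
  add_mem' := by
    rintro a b ⟨ha, ha'⟩ ⟨hb, hb'⟩
    exact ⟨g.add_mem ha hb, fun y hy => by
      have h1 := ha' y hy
      have h2 := hb' y hy
      rw [Ring.lie_def] at h1 h2 ⊢
      rw [add_mul, mul_add, add_sub_add_comm, map_add, h1, h2, add_zero]⟩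
  smul_mem' := by
    rintro c a ⟨ha, ha'⟩
    exact ⟨g.smul_mem c ha, fun y hy => by
      have h1 := ha' y hy
      rw [Ring.lie_def] at h1 ⊢
      rw [smul_mul_assoc, mul_smul_comm, ← smul_sub, map_smul, h1, smul_zero]⟩

/-- The index of the Lie algebra `g`: the minimum over all functionals of the
dimension of the kernel of the corresponding Kirillov form. -/
def lieIndex {n : ℕ} (g : Submodule ℂ (M n)) : ℕ :=
  sInf {d : ℕ | ∃ F : M n →ₗ[ℂ] ℂ, d = Module.finrank ℂ ↥(kirKer g F)}

/-- The underlying undirected graph of the directed graph `Γ_{F_S}`. -/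
def gammaGraph {n : ℕ} (S : Finset (Fin n × Fin n)) : SimpleGraph (Fin n) where
  Adj p q := p ≠ q ∧ ((p, q) ∈ S ∨ (q, p) ∈ S)
  symm := ⟨fun p q h => ⟨h.1.symm, h.2.symm⟩⟩
  loopless := ⟨fun p h => h.1 rfl⟩

/-- `F_S` is small: `S` consists of strict relations of the poset and `Γ_{F_S}`
is a spanning tree of the comparability graph. -/
def Small {n : ℕ} (le : Fin n → Fin n → Prop) (S : Finset (Fin n × Fin n)) : Prop :=
  (∀ pq ∈ S, Strict le pq.1 pq.2) ∧ (gammaGraph S).IsTree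

/-- `U_{F_S}(P)`: the sinks of `Γ_{F_S}`. -/
def sinks {n : ℕ} (S : Finset (Fin n × Fin n)) : Set (Fin n) :=
  {p | (∃ q, (q, p) ∈ S) ∧ ∀ q, (p, q) ∉ S}

/-- `D_{F_S}(P)`: the sources of `Γ_{F_S}`. -/
def sources {n : ℕ} (S : Finset (Fin n × Fin n)) : Set (Fin n) :=
  {p | (∃ q, (p, q) ∈ S) ∧ ∀ q, (q, p) ∉ S}

/-- `B_{F_S}(P)`: the vertices of `Γ_{F_S}` that are neither sinks nor sources. -/
def betweens {n : ℕ} (S : Finset (Fin n × Fin n)) : Set (Fin n) :=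
  {p | (∃ q, (p, q) ∈ S) ∧ ∃ q, (q, p) ∈ S}

/-- `U` is a filter (up-closed set) of the poset. -/
def IsPosetFilter {n : ℕ} (le : Fin n → Fin n → Prop) (U : Set (Fin n)) : Prop :=
  ∀ p ∈ U, ∀ q, le p q → q ∈ U

/-- `D` is an order ideal (down-closed set) of the poset. -/
def IsPosetIdeal {n : ℕ} (le : Fin n → Fin n → Prop) (D : Set (Fin n)) : Prop :=
  ∀ p ∈ D, ∀ q, le q p → q ∈ D

/-- Helper to build elements of `Fin n` from natural numbers. -/
def fmk (n : ℕ) (h : 0 < n) (i : ℕ) : Fin n := ⟨i % n, Nat.mod_lt _ h⟩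

/-- Restriction of a matrix along an embedding of index types. -/
def restrictMat {N K : ℕ} (f : Fin K → Fin N) (B : M N) : M K :=
  Matrix.of fun p q => B (f p) (f q)

/-!
Write `c` for the element `p_{⌊(n-1)/2⌋+1}` (0-indexed: `(n - 1) / 2`); the functional pairs `p`
with its mirror image `n - 1 - p` for `p < c`, and `c` with every `q > c`.

Frobenius: let `x` lie in the kernel of the Kirillov form. Testing `x` against the trace-zero
diagonal matrices shows that `F ⁅x, E_{aa}⁆` does not depend on `a`; since the `E_{aa}` sum to the
identity, these values vanish. Hence `F ⁅x, E_{ab}⁆ = 0` for every relation `a ≼ b`, and these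
equations kill the entries of `x` one block at a time.

Spectrum: as `F` is Frobenius, the principal element is unique; it is the diagonal matrix
`t - [c < p]` with `t = (n - 1 - c) / n`.
Its adjoint action multiplies `E_{pq}` (for `p ≼ q`) by `1` if `p ≤ c < q` and by `0` otherwise,
so both eigenspaces are spanned by matrix units (plus diagonal matrices for eigenvalue `0`), and
a count of the relations of the poset gives equal dimensions.
-/

open Finset Matrix

variable {n : ℕ}

lemma card_filter_fst_le_snd {α : Type*} [LinearOrder α] (s : Finset α) :
    #{x ∈ s ×ˢ s | x.1 ≤ x.2} = (#s + 1).choose 2 := by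
  rw [← card_sym2]
  refine card_nbij' (fun x => s(x.1, x.2)) (fun z => (z.inf, z.sup)) ?_ ?_ ?_ ?_
  · intro x hx
    simp only [coe_filter, mem_product, Set.mem_ofPred_eq] at hx
    simpa using hx.1
  · intro z hz
    induction z with | _ a b
    simp only [mem_coe, mk_mem_sym2_iff] at hz
    simp only [coe_filter, mem_product, Set.mem_ofPred_eq, Sym2.inf_mk, Sym2.sup_mk]
    rcases le_total a b with h | h <;> simp [h, hz]
  · intro x hx
    simp only [coe_filter, mem_product, Set.mem_ofPred_eq] at hx
    simp [hx.2]
  · intro z _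
    induction z with | _ a b
    rcases le_total a b with h | h <;> simp [h, Sym2.eq_swap]

def supported (s : Set (Fin n × Fin n)) : Submodule ℂ (M n) where
  carrier := {A | ∀ p q, (p, q) ∉ s → A p q = 0}
  add_mem' hA hB p q h := by simp [hA p q h, hB p q h]
  zero_mem' _ _ _ := rfl
  smul_mem' a A hA p q h := by simp [hA p q h]

lemma mem_supported {s : Set (Fin n × Fin n)} {A : M n} :
    A ∈ supported s ↔ ∀ p q, (p, q) ∉ s → A p q = 0 := Iff.rfl

lemma supported_inf_supported (s t : Set (Fin n × Fin n)) :
    supported s ⊓ supported t = supported (s ∩ t) := by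
  ext A
  simp only [Submodule.mem_inf, mem_supported, Set.mem_inter_iff, not_and_or]
  exact ⟨fun ⟨hs, ht⟩ p q h => h.elim (hs p q) (ht p q),
    fun h => ⟨fun p q hp => h p q (Or.inl hp), fun p q hq => h p q (Or.inr hq)⟩⟩

def supportedEquiv (s : Finset (Fin n × Fin n)) :
    supported (s : Set (Fin n × Fin n)) ≃ₗ[ℂ] (s → ℂ) where
  toFun A i := A.1 i.1.1 i.1.2
  map_add' _ _ := rfl
  map_smul' _ _ := rfl
  invFun f := ⟨Matrix.of fun p q => if h : (p, q) ∈ s then f ⟨_, h⟩ else 0, fun _ _ h => dif_neg h⟩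
  left_inv A := by
    ext p q
    by_cases h : (p, q) ∈ s
    · simp [h]
    · simp [h, A.2 p q h]
  right_inv f := by
    ext ⟨⟨p, q⟩, h⟩
    simp [h]

lemma finrank_supported (s : Finset (Fin n × Fin n)) :
    Module.finrank ℂ (supported (s : Set (Fin n × Fin n))) = #s := by
  rw [(supportedEquiv s).finrank_eq, Module.finrank_fintype_fun_eq_card, Fintype.card_coe]

lemma supported_le_ker_trace {s : Set (Fin n × Fin n)} (hs : ∀ p, (p, p) ∉ s) :
    supported s ≤ LinearMap.ker (traceLinearMap (Fin n) ℂ ℂ) := fun A hA => by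
  simp [Matrix.trace, hA _ _ (hs _)]

lemma finrank_supported_inf_ker_trace (s : Finset (Fin n × Fin n)) {p : Fin n}
    (hp : (p, p) ∈ s) :
    Module.finrank ℂ ↥(supported (s : Set (Fin n × Fin n)) ⊓
      LinearMap.ker (traceLinearMap (Fin n) ℂ ℂ)) = #s - 1 := by
  set W := supported (s : Set (Fin n × Fin n))
  set φ := (traceLinearMap (Fin n) ℂ ℂ).domRestrict W
  have hφ : LinearMap.range φ = ⊤ := LinearMap.range_eq_top.2 fun a =>
    ⟨⟨single p p a, fun i j hij => by
      rw [single_apply, if_neg]; rintro ⟨rfl, rfl⟩; exact hij hp⟩, by simp [φ]⟩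
  have hker : Module.finrank ℂ (LinearMap.ker φ) =
      Module.finrank ℂ ↥(W ⊓ LinearMap.ker (traceLinearMap (Fin n) ℂ ℂ)) := by
    rw [LinearMap.ker_domRestrict, ← Submodule.map_comap_subtype, Submodule.finrank_map_subtype_eq]
  have := φ.finrank_range_add_finrank_ker
  rw [hφ, finrank_top, Module.finrank_self, hker, finrank_supported] at this
  omega

lemma mem_gA {le : Fin n → Fin n → Prop} {A : M n} :
    A ∈ gA le ↔ A.trace = 0 ∧ ∀ p q, p ≠ q → ¬ le p q → A p q = 0 := Iff.rfl

lemma gA_eq_supported_inf_ker_trace (le : Fin n → Fin n → Prop) :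
    gA le = supported {pq | pq.1 = pq.2 ∨ le pq.1 pq.2} ⊓
      LinearMap.ker (traceLinearMap (Fin n) ℂ ℂ) := by
  ext A
  simp only [mem_gA, Submodule.mem_inf, mem_supported, LinearMap.mem_ker, traceLinearMap_apply,
    Set.mem_ofPred_eq, not_or]
  exact ⟨fun ⟨h, hA⟩ => ⟨fun p q hpq => hA p q hpq.1 hpq.2, h⟩,
    fun ⟨hA, h⟩ => ⟨h, fun p q hpq hle => hA p q ⟨hpq, hle⟩⟩⟩

lemma single_mem_gA {le : Fin n → Fin n → Prop} {a b : Fin n} (hab : a ≠ b) (h : le a b) :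
    single a b (1 : ℂ) ∈ gA le := by
  refine ⟨by simp [trace_single_eq_of_ne _ _ _ hab], fun p q _ hpq => ?_⟩
  rw [single_apply, if_neg]
  rintro ⟨rfl, rfl⟩
  exact hpq h

lemma single_sub_single_mem_gA (le : Fin n → Fin n → Prop) (a b : Fin n) :
    single a a (1 : ℂ) - single b b 1 ∈ gA le := by
  refine ⟨by simp, fun p q hpq _ => ?_⟩
  have hoff : ∀ c, single c c (1 : ℂ) p q = 0 := fun c => by
    rw [single_apply, if_neg]
    rintro ⟨rfl, rfl⟩
    exact hpq rfl
  rw [Matrix.sub_apply, hoff, hoff, sub_zero]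

lemma FS_apply (S : Finset (Fin n × Fin n)) (A : M n) : FS S A = ∑ pq ∈ S, A pq.1 pq.2 := rfl

lemma adE_apply (H A : M n) : adE H A = ⁅H, A⁆ := by
  simp [adE, Ring.lie_def]

lemma lie_diagonal_apply (d : Fin n → ℂ) (y : M n) (p q : Fin n) :
    ⁅diagonal d, y⁆ p q = (d p - d q) * y p q := by
  rw [Ring.lie_def, Matrix.sub_apply, diagonal_mul, mul_diagonal]
  ring

lemma eigenspace_adE_diagonal (d : Fin n → ℂ) (μ : ℂ) :
    Module.End.eigenspace (adE (diagonal d)) μ = supported {pq | d pq.1 - d pq.2 = μ} := by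
  ext A
  rw [Module.End.mem_eigenspace_iff, adE_apply, mem_supported]
  constructor
  · intro h p q hpq
    have := congrFun (congrFun h p) q
    rw [lie_diagonal_apply, Matrix.smul_apply, smul_eq_mul] at this
    exact (mul_eq_zero.1 (by linear_combination this)).resolve_left (sub_ne_zero.2 hpq)
  · intro h
    ext p q
    rw [lie_diagonal_apply, Matrix.smul_apply, smul_eq_mul]
    by_cases hpq : d p - d q = μ
    · rw [hpq]
    · rw [h p q hpq, mul_zero, mul_zero]

lemma lie_single_apply (x : M n) (a b p q : Fin n) :
    ⁅x, single a b (1 : ℂ)⁆ p q = (if q = b then x p a else 0) - if p = a then x b q else 0 := by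
  rw [Ring.lie_def, Matrix.sub_apply]
  congr 1 <;> split_ifs with h <;> simp [h]

lemma IsFrobeniusOn.eq_of_isPrincipal {g : Submodule ℂ (M n)} {F : M n →ₗ[ℂ] ℂ} {H H' : M n}
    (hF : IsFrobeniusOn g F) (hH : IsPrincipal g F H) (hH' : IsPrincipal g F H') : H = H' :=
  sub_eq_zero.1 <| hF _ (g.sub_mem hH.1 hH'.1) fun y hy => by
    rw [Ring.lie_def, sub_mul, mul_sub, sub_sub_sub_comm, ← Ring.lie_def, ← Ring.lie_def, map_sub,
      hH.2 y hy, hH'.2 y hy, sub_self]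

/-- Trace-zero diagonal matrices and the identity span all diagonal matrices. -/
lemma lie_single_self_eq_zero_of_mem_kirKer {le : Fin n → Fin n → Prop} {F : M n →ₗ[ℂ] ℂ}
    {x : M n} (hx : x ∈ kirKer (gA le) F) (a : Fin n) : F ⁅x, single a a (1 : ℂ)⁆ = 0 := by
  have hconst : ∀ b, F ⁅x, single b b (1 : ℂ)⁆ = F ⁅x, single a a (1 : ℂ)⁆ := fun b => by
    rw [← sub_eq_zero, ← map_sub, ← adE_apply, ← adE_apply, ← map_sub, adE_apply]
    exact hx.2 _ (single_sub_single_mem_gA le b a)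
  have hsum : ∑ b, F ⁅x, single b b (1 : ℂ)⁆ = 0 := by
    simp_rw [← adE_apply, ← map_sum, sum_single_one, adE_apply, Ring.lie_def, mul_one, one_mul,
      sub_self, map_zero]
  rw [sum_congr rfl fun b _ => hconst b, sum_const, card_univ, Fintype.card_fin,
    nsmul_eq_mul] at hsum
  exact (mul_eq_zero.1 hsum).resolve_left (Nat.cast_ne_zero.2 (Fin.pos a).ne')

lemma lie_single_eq_zero_of_mem_kirKer {le : Fin n → Fin n → Prop} {F : M n →ₗ[ℂ] ℂ}
    {x : M n} (hx : x ∈ kirKer (gA le) F) {a b : Fin n} (hab : a = b ∨ le a b) :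
    F ⁅x, single a b (1 : ℂ)⁆ = 0 := by
  by_cases h : a = b
  · subst h
    exact lie_single_self_eq_zero_of_mem_kirKer hx a
  · exact hx.2 _ (single_mem_gA h (hab.resolve_left h))

section Star

variable (c : Fin n)

def starLe (p q : Fin n) : Prop := p = q ∨ (p < q ∧ q ≠ c)

instance : DecidableRel (starLe c) := fun p q => by unfold starLe; infer_instance

def starS : Finset (Fin n × Fin n) :=
  (Iio c).image (fun p => (p, p.rev)) ∪ (Ioi c).image (fun q => (c, q))

lemma FS_starS_apply (A : M n) : FS (starS c) A = ∑ p ∈ Iio c, A p p.rev + ∑ q ∈ Ioi c, A c q := by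
  rw [FS_apply, starS, sum_union, sum_image, sum_image]
  · intro q _ q' _ h; exact (Prod.ext_iff.1 h).2
  · intro p _ p' _ h; exact (Prod.ext_iff.1 h).1
  · rw [disjoint_left]
    simp only [mem_image, mem_Iio, mem_Ioi, not_exists, not_and]
    rintro _ ⟨p, hp, rfl⟩ q _ h
    exact hp.ne (Prod.ext_iff.1 h).1.symm

lemma FS_starS_lie_single (x : M n) (a b : Fin n) :
    FS (starS c) ⁅x, single a b (1 : ℂ)⁆ =
      ((if b.rev < c then x b.rev a else 0) - if a < c then x b a.rev else 0) +
      ((if c < b then x c a else 0) - if c = a then ∑ q ∈ Ioi c, x b q else 0) := by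
  simp only [FS_starS_apply, lie_single_apply, sum_sub_distrib, Fin.rev_eq_iff, sum_ite_eq',
    mem_Iio, mem_Ioi, sum_ite_irrel, sum_const_zero]

end Star

section Kernel

variable {c : Fin n}

lemma center_lt_rev (hc : (c : ℕ) = (n - 1) / 2) {p : Fin n} (hp : p < c) : c < p.rev := by
  rw [Fin.lt_def, Fin.val_rev] at *
  omega

lemma rev_le_center (hc : (c : ℕ) = (n - 1) / 2) {q : Fin n} (hq : c < q) : q.rev ≤ c := by
  rw [Fin.lt_def] at hq
  rw [Fin.le_def, Fin.val_rev]
  omega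

variable {x : M n}

lemma apply_eq_zero_of_lt (hx : x ∈ kirKer (gA (starLe c)) (FS (starS c))) {p q : Fin n}
    (h : q < p) : x p q = 0 :=
  hx.1.2 p q h.ne' fun hle => hle.elim h.ne' fun hle => h.asymm hle.1

lemma apply_center_eq_zero (hx : x ∈ kirKer (gA (starLe c)) (FS (starS c))) {p : Fin n}
    (h : p ≠ c) : x p c = 0 :=
  hx.1.2 p c h fun hle => hle.elim h fun hle => hle.2 rfl

lemma starS_equation (hx : x ∈ kirKer (gA (starLe c)) (FS (starS c))) {a b : Fin n}
    (hab : starLe c a b) :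
    ((if b.rev < c then x b.rev a else 0) - if a < c then x b a.rev else 0) +
      ((if c < b then x c a else 0) - if c = a then ∑ q ∈ Ioi c, x b q else 0) = 0 := by
  rw [← FS_starS_lie_single]
  exact lie_single_eq_zero_of_mem_kirKer hx (Or.inr hab)

lemma kirKer_low_block (hc : (c : ℕ) = (n - 1) / 2)
    (hx : x ∈ kirKer (gA (starLe c)) (FS (starS c))) {i a : Fin n}
    (hia : i < a) (hac : a < c) : x i a = 0 := by
  have hci := center_lt_rev hc (hia.trans hac)
  have h := starS_equation hx (a := a) (b := i.rev) (Or.inr ⟨hac.trans hci, hci.ne'⟩)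
  simpa [hia.trans hac, hac, hac.ne', hci, apply_eq_zero_of_lt hx (Fin.rev_lt_rev.2 hia),
    apply_eq_zero_of_lt hx hac] using h

lemma kirKer_high_block (hc : (c : ℕ) = (n - 1) / 2)
    (hx : x ∈ kirKer (gA (starLe c)) (FS (starS c))) {b q : Fin n}
    (hcb : c < b) (hbq : b < q) : x b q = 0 := by
  have hqb := Fin.rev_lt_rev.2 hbq
  have hqc := hqb.trans_le (rev_le_center hc hcb)
  have h := starS_equation hx (a := q.rev) (b := b) (Or.inr ⟨hqc.trans hcb, hcb.ne'⟩)
  simpa [hqc, hqc.ne', hcb, apply_eq_zero_of_lt hx hqb, apply_eq_zero_of_lt hx hqc] using h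

lemma kirKer_antidiagonal (hc : (c : ℕ) = (n - 1) / 2)
    (hx : x ∈ kirKer (gA (starLe c)) (FS (starS c))) {a : Fin n}
    (hac : a < c) : x a a.rev = 0 := by
  have h := starS_equation hx (Or.inl (rfl : a = a))
  simpa [hac, hac.ne', hac.not_gt, (center_lt_rev hc hac).not_gt] using h

lemma kirKer_row_center (hc : (c : ℕ) = (n - 1) / 2)
    (hx : x ∈ kirKer (gA (starLe c)) (FS (starS c))) {a : Fin n}
    (hca : c < a) : x c a = 0 := by
  have h := starS_equation hx (Or.inl (rfl : a = a))
  by_cases har : a.rev < c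
  · simpa [har, hca, hca.ne, hca.not_gt, by simpa using kirKer_antidiagonal hc hx har] using h
  · simpa [har, hca, hca.ne, hca.not_gt] using h

lemma kirKer_above_antidiagonal (hc : (c : ℕ) = (n - 1) / 2)
    (hx : x ∈ kirKer (gA (starLe c)) (FS (starS c))) {a b : Fin n}
    (hab : a < b) (hbc : b < c) : x b a.rev = 0 := by
  have h := starS_equation hx (a := a) (b := b) (Or.inr ⟨hab, hbc.ne⟩)
  simpa [(center_lt_rev hc hbc).not_gt, hab.trans hbc, (hab.trans hbc).ne', hbc.not_gt] using h

lemma kirKer_below_antidiagonal (hc : (c : ℕ) = (n - 1) / 2)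
    (hx : x ∈ kirKer (gA (starLe c)) (FS (starS c))) {j a : Fin n}
    (hjc : j < c) (hca : c < a) (hja : j < a.rev) : x j a = 0 := by
  have hcj := center_lt_rev hc hjc
  have h := starS_equation hx (a := a) (b := j.rev) (Or.inr ⟨Fin.lt_rev_iff.1 hja, hcj.ne'⟩)
  simpa [hjc, hcj, hca.ne, hca.not_gt, kirKer_row_center hc hx hca] using h

lemma kirKer_diag_eq_center (hc : (c : ℕ) = (n - 1) / 2)
    (hx : x ∈ kirKer (gA (starLe c)) (FS (starS c))) (p : Fin n) : x p p = x c c := by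
  have high : ∀ b, c < b → x b b = x c c := fun b hcb => by
    have h := starS_equation hx (a := c) (b := b) (Or.inr ⟨hcb, hcb.ne'⟩)
    have hrow : ∑ q ∈ Ioi c, x b q = x b b := sum_eq_single_of_mem b (mem_Ioi.2 hcb)
      fun q _ hqb =>
        (lt_or_gt_of_ne hqb).elim (apply_eq_zero_of_lt hx) (kirKer_high_block hc hx hcb)
    have hcol : (if b.rev < c then x b.rev c else 0) = 0 := by
      split_ifs with hbr
      exacts [apply_center_eq_zero hx hbr.ne, rfl]
    simp only [hcol, hcb, lt_irrefl, if_true, if_false, hrow] at h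
    linear_combination -h
  rcases lt_trichotomy p c with hpc | rfl | hcp
  · have hcp := center_lt_rev hc hpc
    have h := starS_equation hx (a := p) (b := p.rev) (Or.inr ⟨hpc.trans hcp, hcp.ne'⟩)
    simp only [Fin.rev_rev, hpc, hcp, hpc.ne', if_true, if_false,
      apply_eq_zero_of_lt hx hpc] at h
    rw [← high p.rev hcp]
    linear_combination h
  · rfl
  · exact high p hcp

lemma kirKer_diag_eq_zero (hc : (c : ℕ) = (n - 1) / 2)
    (hx : x ∈ kirKer (gA (starLe c)) (FS (starS c))) (p : Fin n) : x p p = 0 := by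
  have htr : (n : ℂ) * x c c = 0 := by
    simp_rw [← hx.1.1, Matrix.trace, Matrix.diag_apply, kirKer_diag_eq_center hc hx, sum_const,
      card_univ, Fintype.card_fin, nsmul_eq_mul]
  rw [kirKer_diag_eq_center hc hx,
    (mul_eq_zero.1 htr).resolve_left (Nat.cast_ne_zero.2 (Fin.pos c).ne')]

theorem isFrobeniusOn_starS (hc : (c : ℕ) = (n - 1) / 2) :
    IsFrobeniusOn (gA (starLe c)) (FS (starS c)) := by
  intro x hxg hker
  have hx : x ∈ kirKer (gA (starLe c)) (FS (starS c)) := ⟨hxg, hker⟩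
  ext p q
  rcases lt_trichotomy p q with hpq | rfl | hqp
  · rcases lt_trichotomy q c with hqc | rfl | hcq
    · exact kirKer_low_block hc hx hpq hqc
    · exact apply_center_eq_zero hx hpq.ne
    rcases lt_trichotomy p c with hpc | rfl | hcp
    · rcases lt_trichotomy p q.rev with h | rfl | h
      · exact kirKer_below_antidiagonal hc hx hpc hcq h
      · simpa using kirKer_antidiagonal hc hx hpc
      · simpa using kirKer_above_antidiagonal hc hx h hpc
    · exact kirKer_row_center hc hx hcq
    · exact kirKer_high_block hc hx hcp hpq
  · exact kirKer_diag_eq_zero hc hx p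
  · exact apply_eq_zero_of_lt hx hqp

end Kernel

section Spectrum

variable (c : Fin n)

/-- The constant `(n - 1 - c) / n` makes the trace vanish. -/
def starPrincipal : M n := diagonal fun p => ((n - 1 - c : ℕ) : ℂ) / n - if c < p then 1 else 0

def starRel : Finset (Fin n × Fin n) := {pq | starLe c pq.1 pq.2}

variable {c}

lemma starPrincipal_mem_gA : starPrincipal c ∈ gA (starLe c) := by
  refine ⟨?_, fun p q hpq _ => diagonal_apply_ne _ hpq⟩
  rw [starPrincipal, trace_diagonal, sum_sub_distrib, sum_const, card_univ, Fintype.card_fin,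
    sum_boole, filter_lt_eq_Ioi, Fin.card_Ioi, nsmul_eq_mul]
  rw [mul_div_cancel₀ _ (Nat.cast_ne_zero.2 (Fin.pos c).ne'), sub_self]

lemma FS_starS_lie_starPrincipal (hc : (c : ℕ) = (n - 1) / 2) (y : M n) :
    FS (starS c) ⁅starPrincipal c, y⁆ = FS (starS c) y := by
  simp only [FS_starS_apply, starPrincipal, lie_diagonal_apply]
  congr 1 <;> refine sum_congr rfl fun p hp => ?_
  · rw [mem_Iio] at hp
    simp [hp.not_gt, center_lt_rev hc hp]
  · rw [mem_Ioi] at hp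
    simp [hp]

lemma isPrincipal_starPrincipal (hc : (c : ℕ) = (n - 1) / 2) :
    IsPrincipal (gA (starLe c)) (FS (starS c)) (starPrincipal c) :=
  ⟨starPrincipal_mem_gA, fun y _ => FS_starS_lie_starPrincipal hc y⟩

lemma gA_starLe : gA (starLe c) =
    supported ↑(starRel c) ⊓ LinearMap.ker (traceLinearMap (Fin n) ℂ ℂ) := by
  rw [gA_eq_supported_inf_ker_trace]
  congr 2
  ext ⟨p, q⟩
  simp only [starRel, mem_coe, mem_filter, mem_univ, true_and, Set.mem_ofPred_eq]
  exact or_iff_right_of_imp Or.inl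

lemma gA_inf_eigenspace_starPrincipal (μ : ℂ) :
    gA (starLe c) ⊓ Module.End.eigenspace (adE (starPrincipal c)) μ =
      supported ↑((starRel c).filter fun pq => (if pq.1 ≤ c ∧ c < pq.2 then 1 else 0 : ℂ) = μ) ⊓
        LinearMap.ker (traceLinearMap (Fin n) ℂ ℂ) := by
  rw [gA_starLe, starPrincipal, eigenspace_adE_diagonal, inf_right_comm, supported_inf_supported]
  congr 2
  ext ⟨p, q⟩
  simp only [starRel, mem_coe, mem_filter, mem_univ, true_and, Set.mem_inter_iff, Set.mem_ofPred_eq,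
    sub_sub_sub_cancel_left]
  refine and_congr_right fun hpq => ?_
  have hle : p ≤ q := hpq.elim le_of_eq fun h => h.1.le
  by_cases hp : c < p <;> by_cases hq : c < q
  · simp [hp, hq, hp.not_ge]
  · exact absurd (hp.trans_le hle) hq
  · simp [hp, hq, not_lt.1 hp]
  · simp [hp, hq]

lemma filter_starRel_eq_product :
    (starRel c).filter (fun pq => pq.1 ≤ c ∧ c < pq.2) = Iic c ×ˢ Ioi c := by
  ext ⟨p, q⟩
  simp only [starRel, mem_filter, mem_univ, true_and, mem_product, mem_Iic, mem_Ioi]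
  exact ⟨And.right, fun h => ⟨Or.inr ⟨h.1.trans_lt h.2, h.2.ne'⟩, h⟩⟩

lemma gA_inf_eigenspace_one_starPrincipal :
    gA (starLe c) ⊓ Module.End.eigenspace (adE (starPrincipal c)) 1 =
      supported ↑(Iic c ×ˢ Ioi c) := by
  rw [gA_inf_eigenspace_starPrincipal]
  simp only [ite_eq_left_iff, zero_ne_one, imp_false, not_not, filter_starRel_eq_product]
  exact inf_eq_left.2 (supported_le_ker_trace fun p hp => by
    simp only [mem_coe, mem_product, mem_Iic, mem_Ioi] at hp
    exact hp.1.not_gt hp.2)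

lemma gA_inf_eigenspace_zero_starPrincipal :
    gA (starLe c) ⊓ Module.End.eigenspace (adE (starPrincipal c)) 0 =
      supported ↑((starRel c).filter fun pq => ¬ (pq.1 ≤ c ∧ c < pq.2)) ⊓
        LinearMap.ker (traceLinearMap (Fin n) ℂ ℂ) := by
  rw [gA_inf_eigenspace_starPrincipal]
  simp only [ite_eq_right_iff, one_ne_zero, imp_false]

lemma card_starRel_add_center : #(starRel c) + c = (n + 1).choose 2 := by
  have hall := card_filter_fst_le_snd (univ : Finset (Fin n))
  rw [univ_product_univ, card_univ, Fintype.card_fin] at hall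
  have hsplit := card_filter_add_card_filter_not (s := {x | x.1 ≤ x.2})
    (fun pq : Fin n × Fin n => starLe c pq.1 pq.2)
  have hrel : ({pq | pq.1 ≤ pq.2 ∧ starLe c pq.1 pq.2} : Finset (Fin n × Fin n)) = starRel c := by
    ext ⟨p, q⟩
    simp only [starRel, mem_filter, mem_univ, true_and]
    exact ⟨And.right, fun h => ⟨h.elim le_of_eq fun h => h.1.le, h⟩⟩
  have hcol : ({pq | pq.1 ≤ pq.2 ∧ ¬ starLe c pq.1 pq.2} : Finset (Fin n × Fin n)) =
      Iio c ×ˢ {c} := by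
    ext ⟨p, q⟩
    simp only [mem_filter, mem_univ, true_and, mem_product, mem_Iio, mem_singleton]
    unfold starLe
    omega
  rw [filter_filter, filter_filter, hrel, hcol, card_product, Fin.card_Iio, card_singleton, mul_one,
    hall] at hsplit
  exact hsplit

theorem eigMult_starPrincipal (hc : (c : ℕ) = (n - 1) / 2) :
    eigMult (gA (starLe c)) (starPrincipal c) 0 = eigMult (gA (starLe c)) (starPrincipal c) 1 ∧
      eigMult (gA (starLe c)) (starPrincipal c) 0 + eigMult (gA (starLe c)) (starPrincipal c) 1 =
        Module.finrank ℂ (gA (starLe c)) := by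
  have hcc : (c, c) ∈ starRel c := mem_filter.2 ⟨mem_univ _, Or.inl rfl⟩
  have h1 : eigMult (gA (starLe c)) (starPrincipal c) 1 = (c + 1) * (n - 1 - c) := by
    rw [eigMult, gA_inf_eigenspace_one_starPrincipal, finrank_supported, card_product, Fin.card_Iic,
      Fin.card_Ioi]
  have h0 : eigMult (gA (starLe c)) (starPrincipal c) 0 =
      #((starRel c).filter fun pq => ¬ (pq.1 ≤ c ∧ c < pq.2)) - 1 := by
    rw [eigMult, gA_inf_eigenspace_zero_starPrincipal,
      finrank_supported_inf_ker_trace _ (mem_filter.2 ⟨hcc, fun h => lt_irrefl c h.2⟩)]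
  have hg : Module.finrank ℂ (gA (starLe c)) = #(starRel c) - 1 := by
    rw [gA_starLe, finrank_supported_inf_ker_trace _ hcc]
  have hsplit := card_filter_add_card_filter_not (s := starRel c) (fun pq => pq.1 ≤ c ∧ c < pq.2)
  rw [filter_starRel_eq_product, card_product, Fin.card_Iic, Fin.card_Ioi] at hsplit
  have hrel := card_starRel_add_center (c := c)
  have hchoose := Nat.add_one_mul_choose_eq n 1
  simp only [Nat.choose_one_right, Nat.reduceAdd] at hchoose
  have hpos := Fin.pos c
  generalize (n + 1).choose 2 = X at hrel hchoose
  have key : #((starRel c).filter fun pq => ¬ (pq.1 ≤ c ∧ c < pq.2)) =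
      (c + 1) * (n - 1 - c) + 1 := by
    rcases (by omega : n = 2 * c + 1 ∨ n = 2 * c + 2) with h | h <;> rw [h] at hchoose
    · rw [show n - 1 - c = c by omega] at hsplit ⊢
      nlinarith
    · rw [show n - 1 - c = c + 1 by omega] at hsplit ⊢
      nlinarith
  rw [h0, h1, hg]
  omega

end Spectrum

lemma val_fmk (h : 0 < n) {i : ℕ} (hi : i < n) : (fmk n h i : ℕ) = i := Nat.mod_eq_of_lt hi

lemma image_fmk_eq_starS (h : 0 < n) {c : Fin n} (hc : (c : ℕ) = (n - 1) / 2) :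
    ((Icc 1 ((n - 1) / 2)).image fun i => (fmk n h (i - 1), fmk n h (n - i))) ∪
      ((Icc ((n + 1) / 2 + 1) n).image fun i => (fmk n h ((n + 1) / 2 - 1), fmk n h (i - 1))) =
      starS c := by
  rw [starS]
  congr 1 <;> ext ⟨p, q⟩ <;> simp only [mem_image, mem_Icc, mem_Iio, mem_Ioi, Prod.mk.injEq]
  · constructor
    · rintro ⟨i, hi, rfl, rfl⟩
      refine ⟨fmk n h (i - 1), ?_, rfl, ?_⟩
      · rw [Fin.lt_def, val_fmk h (by omega)]; omega
      · rw [Fin.ext_iff, Fin.val_rev, val_fmk h (by omega), val_fmk h (by omega)]; omega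
    · rintro ⟨p, hp, rfl, rfl⟩
      refine ⟨p + 1, by rw [Fin.lt_def] at hp; omega, ?_, ?_⟩
      · rw [Fin.ext_iff, val_fmk h (by omega), Nat.add_sub_cancel]
      · rw [Fin.ext_iff, Fin.val_rev, val_fmk h (by omega)]
  · constructor
    · rintro ⟨i, hi, rfl, rfl⟩
      refine ⟨fmk n h (i - 1), ?_, ?_, rfl⟩
      · rw [Fin.lt_def, val_fmk h (by omega)]; omega
      · rw [Fin.ext_iff, val_fmk h (by omega)]; omega
    · rintro ⟨q, hq, rfl, rfl⟩
      refine ⟨q + 1, by rw [Fin.lt_def] at hq; omega, ?_, ?_⟩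
      · rw [Fin.ext_iff, val_fmk h (by omega)]; omega
      · rw [Fin.ext_iff, val_fmk h (by omega), Nat.add_sub_cancel]

/-- for `n ≥ 4`, the poset `P*_{4,n}` (the chain
`p₁ ≼ ⋯ ≼ p_{⌊(n-1)/2⌋} ≼ p_{⌊(n-1)/2⌋+2} ≼ ⋯ ≼ p_n` together with
`p_{⌊(n-1)/2⌋+1} ≼ p_{⌊(n-1)/2⌋+2}`, elements `pᵢ` indexed as `i - 1 : Fin n`)
with `F = ∑_{i=1}^{⌊(n-1)/2⌋} E*_{p_i,p_{n+1-i}} + ∑_{i=⌈n/2⌉+1}^{n}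
E*_{p_{⌈n/2⌉},p_i}` (degenerate diagonal summand omitted): `F` is Frobenius on
`g_A(P*_{4,n})` and the spectrum is binary. -/
theorem P4nstar_frobenius_binary_spectrum
    (n : ℕ) (hn : 4 ≤ n)
    (le : Fin n → Fin n → Prop)
    (hle : ∀ p q : Fin n, le p q ↔
      p = q ∨ (p.val < q.val ∧ q.val ≠ (n - 1) / 2))
    (S : Finset (Fin n × Fin n))
    (hS : S =
      ((Finset.Icc 1 ((n - 1) / 2)).image fun i =>
        (fmk n (by omega) (i - 1), fmk n (by omega) (n - i))) ∪
      ((Finset.Icc ((n + 1) / 2 + 1) n).image fun i =>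
        (fmk n (by omega) ((n + 1) / 2 - 1), fmk n (by omega) (i - 1)))) :
    IsFrobeniusOn (gA le) (FS S) ∧
    ∀ H : M n, IsPrincipal (gA le) (FS S) H →
      eigMult (gA le) H 0 = eigMult (gA le) H 1 ∧
      eigMult (gA le) H 0 + eigMult (gA le) H 1 = Module.finrank ℂ ↥(gA le) := by
  obtain ⟨c, hc⟩ : ∃ c : Fin n, (c : ℕ) = (n - 1) / 2 := ⟨⟨(n - 1) / 2, by omega⟩, rfl⟩
  obtain rfl : le = starLe c := by
    ext p q
    simp only [hle, starLe, Fin.lt_def, ne_eq, Fin.ext_iff, hc]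
  obtain rfl : S = starS c := hS.trans (image_fmk_eq_starS _ hc)
  refine ⟨isFrobeniusOn_starS hc, fun H hH => ?_⟩
  obtain rfl := (isFrobeniusOn_starS hc).eq_of_isPrincipal hH (isPrincipal_starPrincipal hc)
  exact eigMult_starPrincipal hc

end
end LiePosets
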